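/- arXiv:2108.08052 — 2 statements merged into one kernel-verified Lean document; each statement's English description precedes it below -/
import Mathlib

section
/- Let (M, vol) be a measure space with finite measure vol, let ε > 0 and λ ≥ 1. Let μ : M → ℝ be a bounded measurable function with ∫_M μ dvol = 1 and μ(x) > ε almost everywhere, and let μ̄ : M → ℝ be an integrable function with ∫_M μ̄ dvol = 1. With μ̄₊(x) = max{ε, μ̄(x)} and μ̄₋(x) = ε − min{ε, μ̄(x)}, the loss ℓ(μ̄) = −∫_M μ·log μ̄₊ dvol + λ·∫_M μ̄₋ dvol satisfies ℓ(μ̄) = D(μ, μ̄₊) − ∫_M μ·log μ dvol + (λ − 1)·∫_M μ̄₋ dvol, where D(f,g) = ∫_M f·log(f/g) dvol − ∫_M f dvol + ∫_M g dvol is the generalized Kullback–Leibler divergence. -/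
open MeasureTheory Real

/-!
Since `μ > ε > 0` a.e., `log (μ / μ̄₊) = log μ - log μ̄₊`, so the divergence term contributes
`∫ μ log μ - ∫ μ log μ̄₊ - ∫ μ + ∫ μ̄₊`. Pointwise `μ̄₊ = μ̄ + μ̄₋`, hence `∫ μ̄₊ = 1 + ∫ μ̄₋ = ∫ μ + ∫ μ̄₋`
and everything but the loss cancels. The work is integrability: `g ≥ ε > 0` gives
`|log g| ≤ |log ε| + |g|`, and `μ` is bounded.
-/

namespace MeasureTheory

variable {α : Type*} [MeasurableSpace α] {ν : Measure α}

theorem Integrable.const_max [IsFiniteMeasure ν] {f : α → ℝ} (hf : Integrable f ν) (c : ℝ) :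
    Integrable (fun x => max c (f x)) ν := by
  simpa only [Pi.sup_def] using (integrable_const c).sup hf

theorem Integrable.const_sub_min [IsFiniteMeasure ν] {f : α → ℝ} (hf : Integrable f ν) (c : ℝ) :
    Integrable (fun x => c - min c (f x)) ν := by
  have hmin : Integrable (fun x => min c (f x)) ν := by
    simpa only [Pi.inf_def] using (integrable_const c).inf hf
  exact (integrable_const c).sub hmin

theorem integral_const_max_eq_integral_add_integral_const_sub_min [IsFiniteMeasure ν]
    {f : α → ℝ} (hf : Integrable f ν) (c : ℝ) :
    ∫ x, max c (f x) ∂ν = ∫ x, f x ∂ν + ∫ x, (c - min c (f x)) ∂ν := by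
  rw [← integral_add hf (hf.const_sub_min c)]
  congr 1 with x
  linarith [max_add_min c (f x)]

theorem Integrable.log_of_le [IsFiniteMeasure ν] {g : α → ℝ} (hg : Integrable g ν) {ε : ℝ}
    (hε : 0 < ε) (hεg : ∀ᵐ x ∂ν, ε ≤ g x) : Integrable (fun x => log (g x)) ν := by
  refine ((integrable_const |log ε|).add hg.abs).mono'
    (measurable_log.comp_aemeasurable hg.aemeasurable).aestronglyMeasurable ?_
  filter_upwards [hεg] with x hx
  have hlower : log ε ≤ log (g x) := log_le_log hε hx
  have hupper : log (g x) ≤ g x - 1 := log_le_sub_one_of_pos (hε.trans_le hx)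
  rw [Pi.add_apply, norm_eq_abs, abs_le]
  constructor <;> linarith [neg_abs_le (log ε), abs_nonneg (log ε), le_abs_self (g x), abs_nonneg (g x)]

theorem integral_mul_log_div_eq_sub {f g : α → ℝ} {C : ℝ} (hf : AEStronglyMeasurable f ν)
    (hfC : ∀ᵐ x ∂ν, ‖f x‖ ≤ C) (hlogf : Integrable (fun x => log (f x)) ν)
    (hlogg : Integrable (fun x => log (g x)) ν) (hf0 : ∀ᵐ x ∂ν, f x ≠ 0)
    (hg0 : ∀ᵐ x ∂ν, g x ≠ 0) :
    ∫ x, f x * log (f x / g x) ∂ν = ∫ x, f x * log (f x) ∂ν - ∫ x, f x * log (g x) ∂ν := by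
  rw [← integral_sub (hlogf.bdd_mul hf hfC) (hlogg.bdd_mul hf hfC)]
  refine integral_congr_ae ?_
  filter_upwards [hf0, hg0] with x hfx hgx
  rw [log_div hfx hgx, mul_sub]

end MeasureTheory

theorem moser_flow_loss_eq_KL_decomposition_general
    {M : Type*} [MeasurableSpace M] (vol : Measure M) [IsFiniteMeasure vol]
    (ε lam : ℝ) (hε : 0 < ε)
    (μ : M → ℝ) (hμmeas : Measurable μ) (hμbdd : ∃ C : ℝ, ∀ x, |μ x| ≤ C)
    (hμone : ∫ x, μ x ∂vol = 1) (hμpos : ∀ᵐ x ∂vol, ε < μ x)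
    (μbar : M → ℝ) (hint : Integrable μbar vol) (hone : ∫ x, μbar x ∂vol = 1) :
    -(∫ x, μ x * Real.log (max ε (μbar x)) ∂vol)
        + lam * ∫ x, (ε - min ε (μbar x)) ∂vol
      = ((∫ x, μ x * Real.log (μ x / max ε (μbar x)) ∂vol)
            - (∫ x, μ x ∂vol) + ∫ x, max ε (μbar x) ∂vol)
          - (∫ x, μ x * Real.log (μ x) ∂vol)
          + (lam - 1) * ∫ x, (ε - min ε (μbar x)) ∂vol := by
  obtain ⟨C, hC⟩ := hμbdd
  have hμC : ∀ᵐ x ∂vol, ‖μ x‖ ≤ C := .of_forall hC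
  have hμint : Integrable μ vol := .of_bound hμmeas.aestronglyMeasurable C hμC
  have hε_le_plus : ∀ᵐ x ∂vol, ε ≤ max ε (μbar x) := .of_forall fun _ => le_max_left _ _
  have hlogμ := hμint.log_of_le hε (hμpos.mono fun _ => le_of_lt)
  have hlog_plus := (hint.const_max ε).log_of_le hε hε_le_plus
  rw [integral_mul_log_div_eq_sub hμmeas.aestronglyMeasurable hμC hlogμ hlog_plus
      (hμpos.mono fun _ hx => (hε.trans hx).ne') (hε_le_plus.mono fun _ hx => (hε.trans_le hx).ne'),
    integral_const_max_eq_integral_add_integral_const_sub_min hint, hμone, hone]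
  ring

/-- The Moser Flow loss `ℓ(μ̄) = −∫ μ·log μ̄₊ + λ·∫ μ̄₋` equals
`D(μ, μ̄₊) − ∫ μ·log μ + (λ − 1)·∫ μ̄₋`, where
`D(f,g) = ∫ f·log(f/g) − ∫ f + ∫ g` is the generalized KL divergence,
`μ̄₊ = max{ε, μ̄}` and `μ̄₋ = ε − min{ε, μ̄}`. -/
theorem moser_flow_loss_eq_KL_decomposition
    {M : Type*} [MeasurableSpace M] (vol : Measure M) [IsFiniteMeasure vol]
    (ε lam : ℝ) (hε : 0 < ε) (hlam : 1 ≤ lam)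
    (μ : M → ℝ) (hμmeas : Measurable μ) (hμbdd : ∃ C : ℝ, ∀ x, |μ x| ≤ C)
    (hμone : ∫ x, μ x ∂vol = 1) (hμpos : ∀ᵐ x ∂vol, ε < μ x)
    (μbar : M → ℝ) (hint : Integrable μbar vol) (hone : ∫ x, μbar x ∂vol = 1) :
    -(∫ x, μ x * Real.log (max ε (μbar x)) ∂vol)
        + lam * ∫ x, (ε - min ε (μbar x)) ∂vol
      = ((∫ x, μ x * Real.log (μ x / max ε (μbar x)) ∂vol)
            - (∫ x, μ x ∂vol) + ∫ x, max ε (μbar x) ∂vol)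
          - (∫ x, μ x * Real.log (μ x) ∂vol)
          + (lam - 1) * ∫ x, (ε - min ε (μbar x)) ∂vol :=
  moser_flow_loss_eq_KL_decomposition_general vol ε lam hε μ hμmeas hμbdd hμone hμpos μbar hint hone
end

section
/- Let (M, vol) be a measure space with finite measure vol, let ε > 0 and λ ≥ 1. Let μ : M → ℝ be a bounded measurable function with ∫_M μ dvol = 1 and μ(x) > ε almost everywhere. Then for every integrable function μ̄ : M → ℝ with ∫_M μ̄ dvol = 1, the loss ℓ(μ̄) = −∫_M μ·log(max{ε, μ̄}) dvol + λ·∫_M (ε − min{ε, μ̄}) dvol satisfies ℓ(μ̄) ≥ −∫_M μ·log μ dvol, and equality holds if and only if μ̄ = μ almost everywhere with respect to vol. In particular μ̄ = μ is the unique minimizer of ℓ over such functions μ̄. -/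
open MeasureTheory Real

/-- Pointwise key inequality for the Moser Flow loss. -/
lemma moser_key {ε lam a b : ℝ} (hε : 0 < ε) (hlam : 1 ≤ lam) (ha : ε < a) :
    0 ≤ a * Real.log a - a * Real.log (max ε b) + lam * (ε - min ε b) - a + b ∧
      (a * Real.log a - a * Real.log (max ε b) + lam * (ε - min ε b) - a + b = 0 →
        b = a) := by
  have ha0 : 0 < a := hε.trans ha
  set m := max ε b with hm
  have hm0 : 0 < m := lt_of_lt_of_le hε (le_max_left _ _)
  have hbm : b ≤ m := le_max_right _ _
  have hmin : ε - min ε b = m - b := by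
    have := min_add_max ε b
    linarith
  have hkey : a * (m / a - 1) = m - a := by field_simp
  have hgibbs : a * (Real.log m - Real.log a) ≤ m - a := by
    have h1 : Real.log (m / a) ≤ m / a - 1 :=
      Real.log_le_sub_one_of_pos (div_pos hm0 ha0)
    rw [Real.log_div hm0.ne' ha0.ne'] at h1
    nlinarith [mul_le_mul_of_nonneg_left h1 ha0.le]
  have hlam' : 0 ≤ (lam - 1) * (m - b) := mul_nonneg (by linarith) (by linarith)
  refine ⟨by rw [hmin]; nlinarith, ?_⟩
  intro heq
  rw [hmin] at heq
  by_contra hne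
  have hma : m ≠ a := by
    intro h
    rcases max_cases ε b with ⟨h1, h2⟩ | ⟨h1, h2⟩
    · have : m = ε := by rw [hm, h1]
      linarith
    · have : m = b := by rw [hm, h1]
      exact hne (by linarith)
  have hne1 : m / a ≠ 1 := by
    intro h
    apply hma
    field_simp at h
    linarith
  have h1 : Real.log (m / a) < m / a - 1 :=
    Real.log_lt_sub_one_of_pos (div_pos hm0 ha0) hne1
  rw [Real.log_div hm0.ne' ha0.ne'] at h1
  have hstrict : a * (Real.log m - Real.log a) < m - a := by
    nlinarith [mul_lt_mul_of_pos_left h1 ha0]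
  nlinarith

/-- The target density `μ` is the unique minimizer of the Moser Flow loss:
for every integrable `μ̄` with unit integral,
`ℓ(μ̄) = −∫ μ·log(max{ε, μ̄}) + λ·∫ (ε − min{ε, μ̄}) ≥ −∫ μ·log μ`,
with equality if and only if `μ̄ = μ` almost everywhere. -/
theorem moser_flow_loss_unique_minimizer
    {M : Type*} [MeasurableSpace M] (vol : Measure M) [IsFiniteMeasure vol]
    (ε lam : ℝ) (hε : 0 < ε) (hlam : 1 ≤ lam)
    (μ : M → ℝ) (hμmeas : Measurable μ) (hμbdd : ∃ C : ℝ, ∀ x, |μ x| ≤ C)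
    (hμone : ∫ x, μ x ∂vol = 1) (hμpos : ∀ᵐ x ∂vol, ε < μ x) :
    ∀ μbar : M → ℝ, Integrable μbar vol → (∫ x, μbar x ∂vol) = 1 →
      (-(∫ x, μ x * Real.log (max ε (μbar x)) ∂vol)
          + lam * ∫ x, (ε - min ε (μbar x)) ∂vol
        ≥ -(∫ x, μ x * Real.log (μ x) ∂vol)) ∧
      ((-(∫ x, μ x * Real.log (max ε (μbar x)) ∂vol)
          + lam * ∫ x, (ε - min ε (μbar x)) ∂vol
        = -(∫ x, μ x * Real.log (μ x) ∂vol)) ↔ μbar =ᵐ[vol] μ) := by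
  intro μbar hμbar hμbarone
  obtain ⟨C, hC⟩ := hμbdd
  set C' := |C| with hC'
  have hC'0 : 0 ≤ C' := abs_nonneg C
  have hC2 : ∀ x, |μ x| ≤ C' := fun x => (hC x).trans (le_abs_self C)
  -- μ is integrable
  have hμint : Integrable μ vol :=
    (integrable_const C').mono' hμmeas.aestronglyMeasurable
      (ae_of_all _ fun x => by simpa using hC2 x)
  -- μ log μ is integrable
  have h1 : Integrable (fun x => μ x * Real.log (μ x)) vol := by
    refine (integrable_const (C' * (|Real.log ε| + |Real.log C'|))).mono'
      (hμmeas.mul hμmeas.log).aestronglyMeasurable ?_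
    filter_upwards [hμpos] with x hx
    have hμx : 0 < μ x := hε.trans hx
    have hμC : μ x ≤ C' := (le_abs_self _).trans (hC2 x)
    have hl1 : Real.log ε < Real.log (μ x) := Real.log_lt_log hε hx
    have hl2 : Real.log (μ x) ≤ Real.log C' := Real.log_le_log hμx hμC
    have : |Real.log (μ x)| ≤ |Real.log ε| + |Real.log C'| := by
      rw [abs_le]
      constructor
      · have := neg_abs_le (Real.log ε); nlinarith [abs_nonneg (Real.log C')]
      · have := le_abs_self (Real.log C'); nlinarith [abs_nonneg (Real.log ε)]
    calc ‖μ x * Real.log (μ x)‖ = |μ x| * |Real.log (μ x)| := abs_mul _ _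
      _ ≤ C' * (|Real.log ε| + |Real.log C'|) :=
          mul_le_mul (hC2 x) this (abs_nonneg _) hC'0
  -- μ log (max ε μbar) is integrable
  have hmaxlog : ∀ b : ℝ, |Real.log (max ε b)| ≤ |Real.log ε| + ε + |b| := by
    intro b
    have hm0 : (0:ℝ) < max ε b := lt_of_lt_of_le hε (le_max_left _ _)
    have hmb : max ε b ≤ ε + |b| :=
      max_le (by nlinarith [abs_nonneg b]) (by nlinarith [le_abs_self b])
    rcases le_or_gt 0 (Real.log (max ε b)) with h | h
    · rw [abs_of_nonneg h]
      have := Real.log_le_sub_one_of_pos hm0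
      have := abs_nonneg (Real.log ε)
      linarith
    · rw [abs_of_neg h]
      have hle : Real.log ε ≤ Real.log (max ε b) := Real.log_le_log hε (le_max_left _ _)
      have := neg_abs_le (Real.log ε)
      have := abs_nonneg b
      linarith
  have hmaxmeas : AEMeasurable (fun x => Real.log (max ε (μbar x))) vol :=
    Real.measurable_log.comp_aemeasurable (aemeasurable_const.max hμbar.aemeasurable)
  have h2 : Integrable (fun x => μ x * Real.log (max ε (μbar x))) vol := by
    refine (((integrable_const (|Real.log ε| + ε)).add hμbar.abs).const_mul C').mono'
      (hμmeas.aemeasurable.mul hmaxmeas).aestronglyMeasurable ?_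
    filter_upwards with x
    calc ‖μ x * Real.log (max ε (μbar x))‖
        = |μ x| * |Real.log (max ε (μbar x))| := abs_mul _ _
      _ ≤ C' * (|Real.log ε| + ε + |μbar x|) :=
          mul_le_mul (hC2 x) (hmaxlog (μbar x)) (abs_nonneg _) hC'0
      _ = C' * ((|Real.log ε| + ε) + |μbar x|) := by ring
  -- ε - min ε μbar is integrable
  have h3 : Integrable (fun x => ε - min ε (μbar x)) vol := by
    have hpp := ((integrable_const ε).sub hμbar).pos_part
    refine hpp.congr (ae_of_all _ fun x => ?_)
    simp only [Pi.sub_apply]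
    rcases max_cases (ε - μbar x) 0 with ⟨hh1, hh2⟩ | ⟨hh1, hh2⟩ <;>
      rcases min_cases ε (μbar x) with ⟨hh3, hh4⟩ | ⟨hh3, hh4⟩ <;>
        rw [hh1, hh3] <;> linarith
  -- integrability of the pieces of the slack function
  have hsub : Integrable (fun x =>
      μ x * Real.log (μ x) - μ x * Real.log (max ε (μbar x))) vol := h1.sub h2
  have hA : Integrable (fun x =>
      (μ x * Real.log (μ x) - μ x * Real.log (max ε (μbar x)))
        + lam * (ε - min ε (μbar x))) vol := hsub.add (h3.const_mul lam)
  have hB : Integrable (fun x => μbar x - μ x) vol := hμbar.sub hμint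
  set g : M → ℝ := fun x =>
    μ x * Real.log (μ x) - μ x * Real.log (max ε (μbar x))
      + lam * (ε - min ε (μbar x)) - μ x + μbar x with hg
  have hgint : Integrable g vol := hA.add hB |>.congr
    (ae_of_all _ fun x => by simp only [hg, Pi.add_apply]; ring)
  have hgval : ∫ x, g x ∂vol =
      (∫ x, μ x * Real.log (μ x) ∂vol) - (∫ x, μ x * Real.log (max ε (μbar x)) ∂vol)
        + lam * ∫ x, (ε - min ε (μbar x)) ∂vol := by
    have e1 : ∫ x, g x ∂vol = ∫ x,
        (((μ x * Real.log (μ x) - μ x * Real.log (max ε (μbar x)))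
          + lam * (ε - min ε (μbar x))) + (μbar x - μ x)) ∂vol :=
      integral_congr_ae (ae_of_all _ fun x => by simp only [hg]; ring)
    rw [e1, integral_add hA hB, integral_add hsub (h3.const_mul lam),
      integral_sub h1 h2, integral_sub hμbar hμint, integral_const_mul,
      hμone, hμbarone]
    ring
  have hg0 : ∀ᵐ x ∂vol, 0 ≤ g x := by
    filter_upwards [hμpos] with x hx
    exact (moser_key hε hlam hx).1
  have hI : 0 ≤ ∫ x, g x ∂vol := integral_nonneg_of_ae hg0
  constructor
  · linarith [hgval, hI]
  · constructor
    · intro heq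
      have hI0 : ∫ x, g x ∂vol = 0 := by linarith [hgval]
      have hgz : g =ᵐ[vol] 0 :=
        (integral_eq_zero_iff_of_nonneg_ae hg0 hgint).mp hI0
      filter_upwards [hgz, hμpos] with x hx1 hx2
      exact (moser_key hε hlam hx2).2 hx1
    · intro heq
      have hB2 : ∫ x, μ x * Real.log (max ε (μbar x)) ∂vol
          = ∫ x, μ x * Real.log (μ x) ∂vol := by
        refine integral_congr_ae ?_
        filter_upwards [heq, hμpos] with x hx1 hx2
        rw [hx1, max_eq_right hx2.le]
      have hD : ∫ x, (ε - min ε (μbar x)) ∂vol = 0 := by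
        have : (fun x => ε - min ε (μbar x)) =ᵐ[vol] (fun _ => (0:ℝ)) := by
          filter_upwards [heq, hμpos] with x hx1 hx2
          rw [hx1, min_eq_left hx2.le]; ring
        rw [integral_congr_ae this, integral_zero]
      rw [hB2, hD]; ring
end
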